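/- arXiv:1108.2352 — 8 statements merged into one kernel-verified Lean document; each statement's English description precedes it below -/
import Mathlib

section
/- Let H = Subgroup.closure {σ, τ} ⊆ GL(3, ℂ). Then Nat.card H = 2n and H is isomorphic as a group to the dihedral group of order 2n, i.e. Nonempty (H ≃* DihedralGroup n). (This realizes the polyhedral group D₂ₙ ≅ ℤ/nℤ ⋊ ℤ/2ℤ of Table 1 of the paper.) -/
open Matrix

section lift
variable {G : Type*} [Group G] (n : ℕ) [NeZero n] (s t : G)

private def dihFun : DihedralGroup n → G
  | .r i => s ^ i.val
  | .sr i => t * s ^ i.val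

variable {n s t}

private lemma pow_mod (hs : s ^ n = 1) (a : ℕ) : s ^ (a % n) = s ^ a := by
  conv_rhs => rw [← Nat.div_add_mod a n, pow_add, pow_mul, hs, one_pow, one_mul]

private lemma pow_val_add (hs : s ^ n = 1) (i j : ZMod n) :
    s ^ (i + j).val = s ^ i.val * s ^ j.val := by
  rw [ZMod.val_add, pow_mod hs, pow_add]

private lemma pow_val_sub (hs : s ^ n = 1) (i j : ZMod n) :
    s ^ (j - i).val = s ^ j.val * (s ^ i.val)⁻¹ := by
  have := pow_val_add hs (j - i) i
  rw [sub_add_cancel] at this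
  rw [eq_mul_inv_iff_mul_eq, ← this]

private lemma t_pow (ht : t * t = 1) (hst : t * s * t = s⁻¹) (k : ℕ) :
    t * s ^ k = (s ^ k)⁻¹ * t := by
  induction k with
  | zero => simp
  | succ k ih =>
      have h1 : t * s = s⁻¹ * t := by
        have := congrArg (fun x => x * t) hst
        simpa [mul_assoc, ht] using this
      calc t * s ^ (k+1) = (t * s ^ k) * s := by rw [pow_succ, mul_assoc]
        _ = (s ^ k)⁻¹ * (t * s) := by rw [ih, mul_assoc]
        _ = (s ^ k)⁻¹ * (s⁻¹ * t) := by rw [h1]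
        _ = (s ^ (k+1))⁻¹ * t := by group

private lemma pow_t (ht : t * t = 1) (hst : t * s * t = s⁻¹) (k : ℕ) :
    s ^ k * t = t * (s ^ k)⁻¹ := by
  calc s ^ k * t = (t * t) * (s ^ k * t) := by rw [ht, one_mul]
    _ = t * (t * s ^ k) * t := by group
    _ = t * ((s ^ k)⁻¹ * t) * t := by rw [t_pow ht hst k]
    _ = t * (s ^ k)⁻¹ * (t * t) := by group
    _ = t * (s ^ k)⁻¹ := by rw [ht, mul_one]

private def dihHom (hs : s ^ n = 1) (ht : t * t = 1) (hst : t * s * t = s⁻¹) :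
    DihedralGroup n →* G where
  toFun := dihFun n s t
  map_one' := by
    show dihFun n s t (.r 0) = 1
    simp [dihFun]
  map_mul' := by
    rintro (i | i) (j | j)
    · show s ^ (i + j).val = s ^ i.val * s ^ j.val
      exact pow_val_add hs i j
    · show t * s ^ (j - i).val = s ^ i.val * (t * s ^ j.val)
      rw [pow_val_sub hs, ← mul_assoc (s ^ i.val) t, pow_t ht hst, mul_assoc]
      exact congrArg (t * ·) ((Commute.pow_pow_self s j.val i.val).inv_right).eq
    · show t * s ^ (i + j).val = t * s ^ i.val * s ^ j.val
      rw [pow_val_add hs, mul_assoc]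
    · show s ^ (j - i).val = t * s ^ i.val * (t * s ^ j.val)
      rw [pow_val_sub hs, mul_assoc, ← mul_assoc (s ^ i.val), pow_t ht hst,
        ← mul_assoc, ← mul_assoc, ht, one_mul]
      exact ((Commute.pow_pow_self s j.val i.val).inv_right).eq

@[simp] private lemma dihHom_r (hs : s ^ n = 1) (ht : t * t = 1) (hst : t * s * t = s⁻¹)
    (i : ZMod n) : dihHom hs ht hst (.r i) = s ^ i.val := rfl

@[simp] private lemma dihHom_sr (hs : s ^ n = 1) (ht : t * t = 1) (hst : t * s * t = s⁻¹)
    (i : ZMod n) : dihHom hs ht hst (.sr i) = t * s ^ i.val := rfl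

end lift

/-- The subgroup of `GL(3, ℂ)` generated by `σ = diag(ε, ε^(n-1), 1)` and
`τ = [[0,1,0],[1,0,0],[0,0,-1]]`, where `ε = exp(2πi/n)`, has order `2n` and is
isomorphic to the dihedral group of order `2n`.  This realizes the polyhedral group
`D₂ₙ ≅ ℤ/nℤ ⋊ ℤ/2ℤ` of Table 1 of the paper. -/
theorem dihedral_polyhedral_group (n : ℕ) (hn : 1 ≤ n) (ε : ℂ)
    (hε : ε = Complex.exp (2 * Real.pi * Complex.I / n))
    (σ τ : GL (Fin 3) ℂ)
    (hσ : (σ : Matrix (Fin 3) (Fin 3) ℂ) = !![ε, 0, 0; 0, ε ^ (n - 1), 0; 0, 0, 1])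
    (hτ : (τ : Matrix (Fin 3) (Fin 3) ℂ) = !![0, 1, 0; 1, 0, 0; 0, 0, -1]) :
    Nat.card ↥(Subgroup.closure {σ, τ} : Subgroup (GL (Fin 3) ℂ)) = 2 * n ∧
      Nonempty (↥(Subgroup.closure {σ, τ} : Subgroup (GL (Fin 3) ℂ)) ≃* DihedralGroup n) := by
  haveI : NeZero n := ⟨by omega⟩
  have hn0 : n ≠ 0 := by omega
  have hprim : IsPrimitiveRoot ε n := hε ▸ Complex.isPrimitiveRoot_exp n hn0
  have hεn : ε ^ n = 1 := hprim.pow_eq_one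
  have hε1n : (ε ^ (n - 1)) ^ n = 1 := by
    rw [← pow_mul, mul_comm, pow_mul, hεn, one_pow]
  have hmul : ε ^ (n - 1) * ε = 1 := by rw [← pow_succ, Nat.sub_add_cancel hn, hεn]
  have hmul' : ε * ε ^ (n - 1) = 1 := by rw [mul_comm]; exact hmul
  have hM : (σ : Matrix (Fin 3) (Fin 3) ℂ) = Matrix.diagonal ![ε, ε ^ (n - 1), 1] := by
    rw [hσ]; ext i j; fin_cases i <;> fin_cases j <;>
      simp [Matrix.diagonal_apply, Matrix.vecHead, Matrix.vecTail]
  have hs : σ ^ n = 1 := by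
    apply Units.ext
    have hv : (![ε, ε ^ (n - 1), 1] : Fin 3 → ℂ) ^ n = 1 := by
      funext i; fin_cases i <;> simp [Pi.pow_apply, hεn, hε1n]
    rw [Units.val_pow_eq_pow_val, hM, Matrix.diagonal_pow, hv, Units.val_one]
    exact Matrix.diagonal_one
  have ht : τ * τ = 1 := by
    apply Units.ext
    rw [Units.val_mul, hτ]
    norm_num [Matrix.mul_fin_three]
    exact Matrix.one_fin_three.symm
  have hst : τ * σ * τ = σ⁻¹ := by
    apply eq_inv_of_mul_eq_one_left
    apply Units.ext
    rw [Units.val_mul, Units.val_mul, Units.val_mul, hσ, hτ]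
    norm_num [Matrix.mul_fin_three, hmul, hmul']
    exact Matrix.one_fin_three.symm
  set f : DihedralGroup n →* GL (Fin 3) ℂ := dihHom hs ht hst with hf
  have hpow : ∀ k : ℕ, ((σ ^ k : GL (Fin 3) ℂ) : Matrix (Fin 3) (Fin 3) ℂ) =
      Matrix.diagonal ![ε ^ k, (ε ^ (n - 1)) ^ k, 1] := by
    intro k
    have hv : (![ε, ε ^ (n - 1), 1] : Fin 3 → ℂ) ^ k = ![ε ^ k, (ε ^ (n - 1)) ^ k, 1] := by
      funext i; fin_cases i <;> simp [Pi.pow_apply]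
    rw [Units.val_pow_eq_pow_val, hM, Matrix.diagonal_pow, hv]
  have hrinj : ∀ i j : ZMod n, σ ^ i.val = σ ^ j.val → i = j := by
    intro i j hij
    have h := congrArg (fun u : GL (Fin 3) ℂ => (u : Matrix (Fin 3) (Fin 3) ℂ) 0 0) hij
    simp only [hpow, Matrix.diagonal_apply_eq] at h
    simp at h
    exact ZMod.val_injective n (hprim.pow_inj (ZMod.val_lt i) (ZMod.val_lt j) h)
  have hne : ∀ i j : ZMod n, σ ^ i.val ≠ τ * σ ^ j.val := by
    intro i j hij
    have h := congrArg (fun u : GL (Fin 3) ℂ => (u : Matrix (Fin 3) (Fin 3) ℂ) 2 2) hij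
    simp only [Units.val_mul, hpow, hτ] at h
    simp [Matrix.mul_apply, Fin.sum_univ_three, Matrix.diagonal_apply] at h
    norm_num at h
  have hinj : Function.Injective f := by
    rintro (i | i) (j | j) hxy
    · exact congrArg DihedralGroup.r (hrinj i j hxy)
    · exact absurd hxy (hne i j)
    · exact absurd hxy.symm (hne j i)
    · exact congrArg DihedralGroup.sr (hrinj i j (mul_left_cancel hxy))
  have hrange : (Subgroup.closure {σ, τ} : Subgroup (GL (Fin 3) ℂ)) = f.range := by
    apply le_antisymm
    · rw [Subgroup.closure_le]
      rintro x (rfl | rfl)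
      · refine ⟨.r 1, ?_⟩
        rw [hf, dihHom_r, show ((1 : ZMod n)).val = 1 % n by rw [← Nat.cast_one,
          ZMod.val_natCast], pow_mod hs, pow_one]
      · refine ⟨.sr 0, ?_⟩
        rw [hf, dihHom_sr]
        simp
    · rintro x ⟨y, rfl⟩
      have hσm : σ ∈ Subgroup.closure ({σ, τ} : Set (GL (Fin 3) ℂ)) :=
        Subgroup.subset_closure (Or.inl rfl)
      have hτm : τ ∈ Subgroup.closure ({σ, τ} : Set (GL (Fin 3) ℂ)) :=
        Subgroup.subset_closure (Or.inr rfl)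
      rcases y with i | i
      · exact pow_mem hσm _
      · exact mul_mem hτm (pow_mem hσm _)
  have e : (Subgroup.closure {σ, τ} : Subgroup (GL (Fin 3) ℂ)) ≃* DihedralGroup n :=
    (MulEquiv.subgroupCongr hrange).trans (MonoidHom.ofInjective hinj).symm
  refine ⟨?_, ⟨e⟩⟩
  rw [Nat.card_congr e.toEquiv, DihedralGroup.nat_card]
end

section
/- Let H = Subgroup.closure {σ, τ} ⊆ GL(3, ℂ). Then Nat.card H = 12 and H is isomorphic as a group to the alternating group on 4 letters, i.e. Nonempty (H ≃* alternatingGroup (Fin 4)). (This realizes the tetrahedral polyhedral group 𝕋 of Table 1 of the paper.) -/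
open Matrix

private def mMat : Fin 12 → Matrix (Fin 3) (Fin 3) ℤ
  | 0 => !![1,0,0; 0,1,0; 0,0,1]
  | 1 => !![-1,0,0; 0,-1,0; 0,0,1]
  | 2 => !![0,1,0; 0,0,1; 1,0,0]
  | 3 => !![0,-1,0; 0,0,-1; 1,0,0]
  | 4 => !![0,-1,0; 0,0,1; -1,0,0]
  | 5 => !![0,0,1; 1,0,0; 0,1,0]
  | 6 => !![0,1,0; 0,0,-1; -1,0,0]
  | 7 => !![0,0,-1; -1,0,0; 0,1,0]
  | 8 => !![0,0,-1; 1,0,0; 0,-1,0]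
  | 9 => !![0,0,1; -1,0,0; 0,-1,0]
  | 10 => !![-1,0,0; 0,1,0; 0,0,-1]
  | 11 => !![1,0,0; 0,-1,0; 0,0,-1]

private def pPerm : Fin 12 → Equiv.Perm (Fin 4)
  | 0 => 1
  | 1 => Equiv.swap 0 1 * Equiv.swap 2 3
  | 2 => Equiv.swap 0 1 * Equiv.swap 1 2
  | 3 => Equiv.swap 1 2 * Equiv.swap 1 3
  | 4 => Equiv.swap 0 2 * Equiv.swap 2 3
  | 5 => Equiv.swap 0 1 * Equiv.swap 0 2
  | 6 => Equiv.swap 0 1 * Equiv.swap 0 3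
  | 7 => Equiv.swap 0 2 * Equiv.swap 0 3
  | 8 => Equiv.swap 0 1 * Equiv.swap 1 3
  | 9 => Equiv.swap 1 2 * Equiv.swap 2 3
  | 10 => Equiv.swap 0 3 * Equiv.swap 1 2
  | 11 => Equiv.swap 0 2 * Equiv.swap 1 3

private lemma mMat_inj : Function.Injective mMat := by decide

private lemma pPerm_inj : Function.Injective pPerm := by decide

private lemma mul_table : ∀ i j : Fin 12, ∃ k : Fin 12,
    mMat i * mMat j = mMat k ∧ pPerm i * pPerm j = pPerm k := by decide

private lemma inv_table : ∀ i : Fin 12, ∃ k : Fin 12, mMat i * mMat k = 1 := by decide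

private lemma pPerm_even : ∀ i : Fin 12, pPerm i ∈ alternatingGroup (Fin 4) := by
  intro i
  rw [Equiv.Perm.mem_alternatingGroup]
  revert i; decide

private def wsW (σ τ : GL (Fin 3) ℂ) : Fin 12 → GL (Fin 3) ℂ
  | 0 => 1
  | 1 => σ
  | 2 => τ
  | 3 => σ * τ
  | 4 => τ * σ
  | 5 => τ * τ
  | 6 => σ * τ * σ
  | 7 => σ * τ * τ
  | 8 => τ * σ * τ
  | 9 => τ * τ * σ
  | 10 => τ * σ * τ * τ
  | 11 => τ * τ * σ * τ

private noncomputable def F : Matrix (Fin 3) (Fin 3) ℤ →+* Matrix (Fin 3) (Fin 3) ℂ :=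
  (Int.castRingHom ℂ).mapMatrix

private lemma F_inj : Function.Injective F := by
  intro A B h
  ext i j
  have := congrArg (fun M => M i j) h
  simpa [F, RingHom.mapMatrix_apply, Matrix.map_apply] using this

private lemma wsW_val (σ τ : GL (Fin 3) ℂ)
    (hσ : (σ : Matrix (Fin 3) (Fin 3) ℂ) = !![-1, 0, 0; 0, -1, 0; 0, 0, 1])
    (hτ : (τ : Matrix (Fin 3) (Fin 3) ℂ) = !![0, 1, 0; 0, 0, 1; 1, 0, 0]) :
    ∀ i : Fin 12, ((wsW σ τ i : GL (Fin 3) ℂ) : Matrix (Fin 3) (Fin 3) ℂ) = F (mMat i) := by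
  have hσ' : ((σ : GL (Fin 3) ℂ) : Matrix (Fin 3) (Fin 3) ℂ) = F (mMat 1) := by
    rw [hσ]
    ext i j
    fin_cases i <;> fin_cases j <;>
      norm_num [F, mMat, RingHom.mapMatrix_apply, Matrix.map_apply,
        Matrix.vecHead, Matrix.vecTail]
  have hτ' : ((τ : GL (Fin 3) ℂ) : Matrix (Fin 3) (Fin 3) ℂ) = F (mMat 2) := by
    rw [hτ]
    ext i j
    fin_cases i <;> fin_cases j <;>
      norm_num [F, mMat, RingHom.mapMatrix_apply, Matrix.map_apply,
        Matrix.vecHead, Matrix.vecTail]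
  intro i
  fin_cases i <;>
    simp only [wsW, Units.val_mul, Units.val_one, hσ', hτ', ← _root_.map_one F, ← _root_.map_mul F] <;>
    exact congrArg F (by decide)

private lemma wsW_mul (σ τ : GL (Fin 3) ℂ)
    (hσ : (σ : Matrix (Fin 3) (Fin 3) ℂ) = !![-1, 0, 0; 0, -1, 0; 0, 0, 1])
    (hτ : (τ : Matrix (Fin 3) (Fin 3) ℂ) = !![0, 1, 0; 0, 0, 1; 1, 0, 0]) :
    ∀ i j : Fin 12, ∃ k : Fin 12, wsW σ τ i * wsW σ τ j = wsW σ τ k ∧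
      pPerm i * pPerm j = pPerm k := by
  intro i j
  obtain ⟨k, hm, hp⟩ := mul_table i j
  refine ⟨k, ?_, hp⟩
  apply Units.ext
  rw [Units.val_mul, wsW_val σ τ hσ hτ, wsW_val σ τ hσ hτ, wsW_val σ τ hσ hτ, ← _root_.map_mul, hm]

private lemma wsW_injective (σ τ : GL (Fin 3) ℂ)
    (hσ : (σ : Matrix (Fin 3) (Fin 3) ℂ) = !![-1, 0, 0; 0, -1, 0; 0, 0, 1])
    (hτ : (τ : Matrix (Fin 3) (Fin 3) ℂ) = !![0, 1, 0; 0, 0, 1; 1, 0, 0]) :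
    Function.Injective (wsW σ τ) := by
  intro i j h
  apply mMat_inj
  apply F_inj
  rw [← wsW_val σ τ hσ hτ, ← wsW_val σ τ hσ hτ, h]

/-- The subgroup of `GL(3, ℂ)` generated by `σ = diag(-1, -1, 1)` and
`τ = [[0,1,0],[0,0,1],[1,0,0]]` has order `12` and is isomorphic to the alternating
group `A₄`.  This realizes the tetrahedral polyhedral group `𝕋` of Table 1 of the paper. -/
theorem tetrahedral_polyhedral_group (σ τ : GL (Fin 3) ℂ)
    (hσ : (σ : Matrix (Fin 3) (Fin 3) ℂ) = !![-1, 0, 0; 0, -1, 0; 0, 0, 1])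
    (hτ : (τ : Matrix (Fin 3) (Fin 3) ℂ) = !![0, 1, 0; 0, 0, 1; 1, 0, 0]) :
    Nat.card ↥(Subgroup.closure {σ, τ} : Subgroup (GL (Fin 3) ℂ)) = 12 ∧
      Nonempty (↥(Subgroup.closure {σ, τ} : Subgroup (GL (Fin 3) ℂ)) ≃*
        ↥(alternatingGroup (Fin 4))) := by
  have hval := wsW_val σ τ hσ hτ
  have hmul := wsW_mul σ τ hσ hτ
  have hinj := wsW_injective σ τ hσ hτ
  -- The range of wsW σ τ is a subgroup
  have hinv : ∀ i : Fin 12, ∃ k : Fin 12, wsW σ τ i * wsW σ τ k = 1 := by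
    intro i
    obtain ⟨k, hk⟩ := inv_table i
    refine ⟨k, Units.ext ?_⟩
    rw [Units.val_mul, hval, hval, ← _root_.map_mul, hk, _root_.map_one, Units.val_one]
  let K : Subgroup (GL (Fin 3) ℂ) :=
    { carrier := Set.range (wsW σ τ)
      one_mem' := ⟨0, rfl⟩
      mul_mem' := by
        rintro x y ⟨i, rfl⟩ ⟨j, rfl⟩
        obtain ⟨k, hk, -⟩ := hmul i j
        exact ⟨k, hk.symm⟩
      inv_mem' := by
        rintro x ⟨i, rfl⟩
        obtain ⟨k, hk⟩ := hinv i
        exact ⟨k, eq_inv_of_mul_eq_one_right hk⟩ }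
  have hKcl : Subgroup.closure {σ, τ} = K := by
    apply le_antisymm
    · rw [Subgroup.closure_le]
      rintro x (rfl | rfl)
      · exact ⟨1, rfl⟩
      · exact ⟨2, rfl⟩
    · rintro x ⟨i, rfl⟩
      have hσm : σ ∈ Subgroup.closure {σ, τ} :=
        Subgroup.subset_closure (Set.mem_insert _ _)
      have hτm : τ ∈ Subgroup.closure {σ, τ} :=
        Subgroup.subset_closure (Set.mem_insert_of_mem _ rfl)
      fin_cases i <;>
        simp only [wsW] <;>
        first
          | exact Subgroup.one_mem _
          | exact hσm
          | exact hτm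
          | exact Subgroup.mul_mem _ hσm hτm
          | exact Subgroup.mul_mem _ hτm hσm
          | exact Subgroup.mul_mem _ hτm hτm
          | exact Subgroup.mul_mem _ (Subgroup.mul_mem _ hσm hτm) hσm
          | exact Subgroup.mul_mem _ (Subgroup.mul_mem _ hσm hτm) hτm
          | exact Subgroup.mul_mem _ (Subgroup.mul_mem _ hτm hσm) hτm
          | exact Subgroup.mul_mem _ (Subgroup.mul_mem _ hτm hτm) hσm
          | exact Subgroup.mul_mem _ (Subgroup.mul_mem _ (Subgroup.mul_mem _ hτm hσm) hτm) hτm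
          | exact Subgroup.mul_mem _ (Subgroup.mul_mem _ (Subgroup.mul_mem _ hτm hτm) hσm) hτm
  have hcard : Nat.card ↥(Subgroup.closure {σ, τ} : Subgroup (GL (Fin 3) ℂ)) = 12 := by
    rw [hKcl]
    have : Nat.card ↥K = Nat.card ↥(Set.range (wsW σ τ)) := rfl
    rw [this, Nat.card_range_of_injective hinj, Nat.card_eq_fintype_card, Fintype.card_fin]
  refine ⟨hcard, ?_⟩
  -- construct the isomorphism
  have hmem : ∀ x : ↥(Subgroup.closure {σ, τ} : Subgroup (GL (Fin 3) ℂ)),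
      ∃ i : Fin 12, wsW σ τ i = (x : GL (Fin 3) ℂ) := by
    intro x
    have : (x : GL (Fin 3) ℂ) ∈ K := by rw [← hKcl]; exact x.2
    exact this
  classical
  let idx : ↥(Subgroup.closure {σ, τ} : Subgroup (GL (Fin 3) ℂ)) → Fin 12 :=
    fun x => (hmem x).choose
  have hidx : ∀ x, wsW σ τ (idx x) = (x : GL (Fin 3) ℂ) := fun x => (hmem x).choose_spec
  let f : ↥(Subgroup.closure {σ, τ} : Subgroup (GL (Fin 3) ℂ)) → Equiv.Perm (Fin 4) :=
    fun x => pPerm (idx x)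
  have fmul : ∀ x y, f (x * y) = f x * f y := by
    intro x y
    obtain ⟨k, hk, hp⟩ := hmul (idx x) (idx y)
    have : wsW σ τ (idx (x * y)) = wsW σ τ k := by
      rw [hidx, ← hk, Subgroup.coe_mul, hidx, hidx]
    show pPerm (idx (x * y)) = pPerm (idx x) * pPerm (idx y)
    rw [hinj this, hp]
  let g : ↥(Subgroup.closure {σ, τ} : Subgroup (GL (Fin 3) ℂ)) →* ↥(alternatingGroup (Fin 4)) :=
    MonoidHom.codRestrict (MonoidHom.mk' f fmul) (alternatingGroup (Fin 4))
      (fun x => pPerm_even (idx x))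
  have ginj : Function.Injective g := by
    intro x y h
    have hf : f x = f y := congrArg Subtype.val h
    have : idx x = idx y := pPerm_inj hf
    have := congrArg (wsW σ τ) this
    rw [hidx, hidx] at this
    exact Subtype.ext this
  have hcardA : Nat.card ↥(alternatingGroup (Fin 4)) = 12 := by
    rw [Nat.card_eq_fintype_card]
    have h2 : 2 * Fintype.card ↥(alternatingGroup (Fin 4)) = 24 := by
      rw [two_mul_card_alternatingGroup, Fintype.card_perm, Fintype.card_fin]
      norm_num [Nat.factorial]
    omega
  have gbij : Function.Bijective g := by
    rw [Nat.bijective_iff_injective_and_card]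
    exact ⟨ginj, by rw [hcard, hcardA]⟩
  exact ⟨MulEquiv.ofBijective g gbij⟩
end

section
/- Let H = Subgroup.closure {σ, τ} ⊆ GL(3, ℂ). Then Nat.card H = 24 and H is isomorphic as a group to the symmetric group on 4 letters, i.e. Nonempty (H ≃* Equiv.Perm (Fin 4)). (This realizes the octahedral polyhedral group 𝕆 of Table 1 of the paper.) -/
/-!
`σ` and `τ` are rotations of the cube `[-1, 1]³`, and the rotation group of the cube acts faithfully
on its four body diagonals. Pick one vertex `d j` on each diagonal so that the `d j` form a regular
tetrahedron: they sum to zero and their Gram matrix is `4 • 1 - J`. Then for `g ∈ S₄` the matrix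
`(sign g / 4) • ∑ⱼ d (g j) d jᵀ` sends each `d j` to `sign g • d (g j)`; as the `d j` span, this
determines it, which makes it a homomorphism `S₄ → GL(3)`. It is injective because distinct `d j`
are not proportional, and it maps `(0 1 2 3)` and `(1 2 3) = (0 1) * (0 1 2 3)`, which generate
`S₄`, to `σ` and `τ`.
-/

open Matrix Equiv

variable {K : Type*} [Field K]

variable (K) in
/-- One vertex on each body diagonal of the cube `[-1, 1]³`, as the columns. -/
def cubeDiagonals : Matrix (Fin 3) (Fin 4) K := !![1, 1, -1, -1; 1, -1, -1, 1; 1, -1, 1, -1]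

variable (K) in
lemma cubeDiagonals_mul_transpose : cubeDiagonals K * (cubeDiagonals K)ᵀ = (4 : K) • 1 := by
  ext i j
  fin_cases i <;> fin_cases j <;>
    simp [cubeDiagonals, mul_apply, Fin.sum_univ_four, one_apply] <;> norm_num

variable (K) in
lemma transpose_mul_cubeDiagonals :
    (cubeDiagonals K)ᵀ * cubeDiagonals K = (4 : K) • 1 - of fun _ _ ↦ 1 := by
  ext i j
  fin_cases i <;> fin_cases j <;>
    simp [cubeDiagonals, mul_apply, Fin.sum_univ_three, one_apply] <;> norm_num

variable (K) in
lemma cubeDiagonals_mulVec_one : cubeDiagonals K *ᵥ (fun _ ↦ 1) = 0 := by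
  ext i
  fin_cases i <;> simp [cubeDiagonals, mulVec, dotProduct, Fin.sum_univ_four]

lemma mul_transpose_mul_cubeDiagonals {m : Type*} [Fintype m] {M : Matrix m (Fin 4) K}
    (hM : M *ᵥ (fun _ ↦ 1) = 0) : M * ((cubeDiagonals K)ᵀ * cubeDiagonals K) = (4 : K) • M := by
  have hJ : M * of (fun (_ _ : Fin 4) ↦ (1 : K)) = 0 := by
    ext i j
    simpa [mul_apply, mulVec, dotProduct] using congrFun hM i
  rw [transpose_mul_cubeDiagonals, Matrix.mul_sub, hJ, Matrix.mul_smul, Matrix.mul_one, sub_zero]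

variable [NeZero (2 : K)]

private lemma four_ne_zero_of_neZero_two : (4 : K) ≠ 0 := by
  simpa [show (4 : K) = 2 * 2 by norm_num] using NeZero.ne (2 : K)

lemma eq_of_mul_cubeDiagonals_eq {m : Type*} [Fintype m] {M N : Matrix m (Fin 3) K}
    (h : M * cubeDiagonals K = N * cubeDiagonals K) : M = N := by
  simpa [Matrix.mul_assoc, cubeDiagonals_mul_transpose, four_ne_zero_of_neZero_two]
    using congrArg (· * (cubeDiagonals K)ᵀ) h

variable (K) in
def cubeRotationMatrix (g : Perm (Fin 4)) : Matrix (Fin 3) (Fin 3) K :=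
  ((Perm.sign g : ℤ) / 4 : K) • ((cubeDiagonals K).submatrix id g * (cubeDiagonals K)ᵀ)

lemma cubeRotationMatrix_mul_cubeDiagonals (g : Perm (Fin 4)) :
    cubeRotationMatrix K g * cubeDiagonals K =
      (Perm.sign g : K) • (cubeDiagonals K).submatrix id g := by
  have hg : (cubeDiagonals K).submatrix id g *ᵥ (fun _ ↦ 1) = 0 := by
    rw [submatrix_mulVec_equiv]
    exact congrArg (· ∘ id) (cubeDiagonals_mulVec_one K)
  rw [cubeRotationMatrix, Matrix.smul_mul, Matrix.mul_assoc, mul_transpose_mul_cubeDiagonals hg,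
    smul_smul, div_mul_cancel₀ _ four_ne_zero_of_neZero_two]

lemma cubeRotationMatrix_one : cubeRotationMatrix K 1 = 1 :=
  eq_of_mul_cubeDiagonals_eq <| by
    rw [cubeRotationMatrix_mul_cubeDiagonals]
    simp

lemma cubeRotationMatrix_mul (g h : Perm (Fin 4)) :
    cubeRotationMatrix K (g * h) = cubeRotationMatrix K g * cubeRotationMatrix K h :=
  eq_of_mul_cubeDiagonals_eq <| by
    have hh : cubeRotationMatrix K g * (cubeDiagonals K).submatrix id h =
        (cubeRotationMatrix K g * cubeDiagonals K).submatrix id h := rfl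
    rw [Matrix.mul_assoc, cubeRotationMatrix_mul_cubeDiagonals (g * h),
      cubeRotationMatrix_mul_cubeDiagonals h, Matrix.mul_smul, hh,
      cubeRotationMatrix_mul_cubeDiagonals g]
    ext i j
    simp only [Perm.sign_mul, Units.val_mul, Int.cast_mul, Matrix.smul_apply, submatrix_apply, id,
      Perm.mul_apply, smul_eq_mul]
    ring

lemma eq_one_of_cubeRotationMatrix_eq_one {g : Perm (Fin 4)} (hg : cubeRotationMatrix K g = 1) :
    g = 1 := by
  have hD : cubeDiagonals K = (Perm.sign g : K) • (cubeDiagonals K).submatrix id g := by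
    rw [← cubeRotationMatrix_mul_cubeDiagonals, hg, Matrix.one_mul]
  have hgram : (cubeDiagonals K)ᵀ * cubeDiagonals K =
      (Perm.sign g : K) • ((cubeDiagonals K)ᵀ * cubeDiagonals K).submatrix id g := by
    nth_rewrite 2 [hD]
    rw [Matrix.mul_smul]
    rfl
  refine Equiv.ext fun j ↦ by_contra fun (hj : g j ≠ j) ↦ ?_
  -- the diagonal entry `(j, j)` of `hgram` reads `3 = -sign g`
  have hjj := congrFun₂ hgram j j
  simp [transpose_mul_cubeDiagonals, one_apply, hj.symm] at hjj
  rcases Int.units_eq_one_or (Perm.sign g) with h | h <;> simp [h] at hjj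
  · exact four_ne_zero_of_neZero_two (by linear_combination hjj)
  · exact NeZero.ne (2 : K) (by linear_combination hjj)

variable (K) in
def cubeRotation : Perm (Fin 4) →* GL (Fin 3) K :=
  MonoidHom.toHomUnits
    { toFun := cubeRotationMatrix K
      map_one' := cubeRotationMatrix_one
      map_mul' := cubeRotationMatrix_mul }

lemma cubeRotation_injective : Function.Injective (cubeRotation K) :=
  (injective_iff_map_eq_one _).2 fun _ hg ↦
    eq_one_of_cubeRotationMatrix_eq_one (congrArg Units.val hg)

lemma closure_finRotate_swap_mul_finRotate :
    Subgroup.closure {finRotate 4, swap 0 1 * finRotate 4} = ⊤ := by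
  have hswap : swap 0 (finRotate 4 0) ∈ Subgroup.closure {finRotate 4, swap 0 1 * finRotate 4} := by
    rw [show swap 0 (finRotate 4 0) = (swap 0 1 * finRotate 4) * (finRotate 4)⁻¹ by decide]
    exact mul_mem (Subgroup.subset_closure (by simp))
      (inv_mem (Subgroup.subset_closure (by simp)))
  rw [eq_top_iff, ← Perm.closure_cycle_adjacent_swap isCycle_finRotate support_finRotate 0,
    Subgroup.closure_le, Set.insert_subset_iff, Set.singleton_subset_iff]
  exact ⟨Subgroup.subset_closure (by simp), hswap⟩

variable (K) in
lemma cubeRotationMatrix_finRotate :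
    cubeRotationMatrix K (finRotate 4) = !![0, -1, 0; 1, 0, 0; 0, 0, 1] := by
  refine eq_of_mul_cubeDiagonals_eq ?_
  rw [cubeRotationMatrix_mul_cubeDiagonals, show Perm.sign (finRotate 4) = -1 by decide]
  ext i j
  fin_cases i <;> fin_cases j <;> simp [cubeDiagonals, mul_apply, Fin.sum_univ_three]

variable (K) in
lemma cubeRotationMatrix_swap_mul_finRotate :
    cubeRotationMatrix K (swap 0 1 * finRotate 4) = !![0, 1, 0; 0, 0, 1; 1, 0, 0] := by
  refine eq_of_mul_cubeDiagonals_eq ?_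
  rw [cubeRotationMatrix_mul_cubeDiagonals, show Perm.sign (swap 0 1 * finRotate 4) = 1 by decide]
  ext i j
  fin_cases i <;> fin_cases j <;>
    simp [cubeDiagonals, mul_apply, Fin.sum_univ_three, swap_apply_of_ne_of_ne]

/-- The subgroup of `GL(3, ℂ)` generated by `σ = [[0,-1,0],[1,0,0],[0,0,1]]` and
`τ = [[0,1,0],[0,0,1],[1,0,0]]` has order `24` and is isomorphic to the symmetric group
`S₄`.  This realizes the octahedral polyhedral group `𝕆` of Table 1 of the paper. -/
theorem octahedral_polyhedral_group (σ τ : GL (Fin 3) ℂ)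
    (hσ : (σ : Matrix (Fin 3) (Fin 3) ℂ) = !![0, -1, 0; 1, 0, 0; 0, 0, 1])
    (hτ : (τ : Matrix (Fin 3) (Fin 3) ℂ) = !![0, 1, 0; 0, 0, 1; 1, 0, 0]) :
    Nat.card ↥(Subgroup.closure {σ, τ} : Subgroup (GL (Fin 3) ℂ)) = 24 ∧
      Nonempty (↥(Subgroup.closure {σ, τ} : Subgroup (GL (Fin 3) ℂ)) ≃*
        Equiv.Perm (Fin 4)) := by
  have hσ' : cubeRotation ℂ (finRotate 4) = σ :=
    Units.ext ((cubeRotationMatrix_finRotate ℂ).trans hσ.symm)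
  have hτ' : cubeRotation ℂ (swap 0 1 * finRotate 4) = τ :=
    Units.ext ((cubeRotationMatrix_swap_mul_finRotate ℂ).trans hτ.symm)
  have hrange : (cubeRotation ℂ).range = Subgroup.closure {σ, τ} := by
    rw [MonoidHom.range_eq_map, ← closure_finRotate_swap_mul_finRotate, MonoidHom.map_closure,
      Set.image_pair, hσ', hτ']
  let e : Subgroup.closure {σ, τ} ≃* Perm (Fin 4) :=
    (MulEquiv.subgroupCongr hrange.symm).trans (MonoidHom.ofInjective cubeRotation_injective).symm
  refine ⟨?_, ⟨e⟩⟩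
  rw [Nat.card_congr e.toEquiv, Nat.card_perm, Nat.card_eq_fintype_card, Fintype.card_fin]
  rfl
end

section
/- There exists a group homomorphism ρ : H →* GL(2, ℂ) such that ρ(σ) is the matrix with rows (0,1), (1,0) and ρ(τ) is the diagonal matrix diag(ω, ω²). (This is the paper's realization of the two-dimensional irreducible representation V₂ of the octahedral group: V₂(σ) = [[0,1],[1,0]], V₂(τ) = diag(ω, ω²).) -/
/-! Every element of `H` is a signed permutation matrix, so squaring its entries forgets the signs
and is multiplicative on `H`: it maps `H` onto the permutation matrices of `S₃` (the action of the
rotations of the cube on its three axes). The permutation representation of `S₃` fixes `(1, 1, 1)`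
and preserves the plane `x₀ + x₁ + x₂ = 0`; in its basis `(1, ω, ω²)`, `(ω, 1, ω²)` the 3-cycle `τ`
acts as `diag(ω, ω²)` and the transposition underlying `σ` swaps the two basis vectors. -/

open Matrix

theorem Finset.sum_mul_sum_of_pairwise_mul_eq_zero {n R : Type*} [Fintype n] [CommSemiring R]
    {v : n → R} (hv : ∀ a b, a ≠ b → v a * v b = 0) (x y : n → R) :
    (∑ a, v a * x a) * (∑ b, v b * y b) = ∑ a, v a ^ 2 * (x a * y a) := by
  rw [Finset.sum_mul_sum]
  refine Finset.sum_congr rfl fun a _ => ?_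
  rw [Finset.sum_eq_single a (fun b _ hb => by rw [mul_mul_mul_comm, hv a b hb.symm, zero_mul])
    (by simp)]
  ring

namespace Matrix

variable {m n R : Type*} [Fintype n]

theorem sandwich_mul_of_mulVec_eq [Fintype m] [DecidableEq m] [Ring R]
    {E : Matrix n m R} {F : Matrix m n R} {M : Matrix m m R} {u w : m → R}
    (hFE : F * E = 1 - vecMulVec u w) (hEu : E *ᵥ u = 0) (hMu : M *ᵥ u = u)
    (N : Matrix m m R) :
    E * (M * N) * F = E * M * F * (E * N * F) := by
  have hsplit : F * E + vecMulVec u w = 1 := by rw [hFE, sub_add_cancel]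
  calc E * (M * N) * F = E * M * (F * E + vecMulVec u w) * N * F := by
        rw [hsplit, Matrix.mul_one, Matrix.mul_assoc E M N]
    _ = E * M * F * (E * N * F) + E * (M * vecMulVec u w) * N * F := by
        simp only [Matrix.mul_add, Matrix.add_mul, Matrix.mul_assoc]
    _ = E * M * F * (E * N * F) := by
        rw [mul_vecMulVec, hMu, mul_vecMulVec, hEu, zero_vecMulVec, Matrix.zero_mul,
          Matrix.zero_mul, add_zero]

theorem map_sq_mul_of_rows_pairwise_mul_eq_zero [CommSemiring R] {M : Matrix m n R}
    (hM : ∀ i a b, a ≠ b → M i a * M i b = 0) (N : Matrix n m R) :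
    (M * N).map (· ^ 2) = M.map (· ^ 2) * N.map (· ^ 2) := by
  ext i j
  simp only [map_apply, mul_apply, sq, Finset.sum_mul_sum_of_pairwise_mul_eq_zero (hM i)]

variable (n R) [DecidableEq n] [CommSemiring R]

/-- Over a domain: the matrices each row of which has a single nonzero entry, equal to `±1`. -/
def rowSignedMonomial : Submonoid (Matrix n n R) where
  carrier := {M | (∀ i a b, a ≠ b → M i a * M i b = 0) ∧ M.map (· ^ 2) *ᵥ 1 = 1}
  one_mem' := by
    refine ⟨fun i a b hab => ?_, ?_⟩
    · by_cases hia : i = a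
      · simp [one_apply, hia, hab]
      · simp [one_apply, hia]
    · rw [Matrix.map_one (· ^ 2) (zero_pow two_ne_zero) (one_pow 2), one_mulVec]
  mul_mem' := by
    rintro M N ⟨hM, hMsq⟩ ⟨hN, hNsq⟩
    refine ⟨fun i a b hab => ?_, ?_⟩
    · simp only [mul_apply, Finset.sum_mul_sum_of_pairwise_mul_eq_zero (hM i), hN _ a b hab,
        mul_zero, Finset.sum_const_zero]
    · rw [map_sq_mul_of_rows_pairwise_mul_eq_zero hM, ← mulVec_mulVec, hNsq, hMsq]

end Matrix

section CubeRootPlane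

variable {K : Type*} [Field K] {ω : K}

def cubeRootPlaneBasis (ω : K) : Matrix (Fin 3) (Fin 2) K := !![1, ω; ω, 1; ω ^ 2, ω ^ 2]

def cubeRootPlaneCoords (ω : K) : Matrix (Fin 2) (Fin 3) K :=
  (3 : K)⁻¹ • !![1, ω ^ 2, ω; ω ^ 2, 1, ω]

theorem cubeRootPlaneCoords_mulVec_one (hω : ω ^ 2 + ω + 1 = 0) :
    cubeRootPlaneCoords ω *ᵥ 1 = 0 := by
  ext i
  fin_cases i <;> simp [cubeRootPlaneCoords, mulVec, dotProduct, Fin.sum_univ_three] <;> grind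

variable [NeZero (3 : K)]

theorem cubeRootPlaneCoords_mul_basis (hω : ω ^ 2 + ω + 1 = 0) :
    cubeRootPlaneCoords ω * cubeRootPlaneBasis ω = 1 := by
  have := NeZero.ne (3 : K)
  ext i j
  fin_cases i <;> fin_cases j <;>
    simp [cubeRootPlaneCoords, cubeRootPlaneBasis, mul_apply, Fin.sum_univ_three] <;> grind

theorem cubeRootPlaneBasis_mul_coords (hω : ω ^ 2 + ω + 1 = 0) :
    cubeRootPlaneBasis ω * cubeRootPlaneCoords ω = 1 - vecMulVec 1 (fun _ => (3 : K)⁻¹) := by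
  have := NeZero.ne (3 : K)
  ext i j
  fin_cases i <;> fin_cases j <;>
    simp [cubeRootPlaneCoords, cubeRootPlaneBasis, mul_apply, one_apply] <;> grind

theorem cubeRootPlaneCoords_mul_swap_mul_basis (hω : ω ^ 2 + ω + 1 = 0) :
    cubeRootPlaneCoords ω * (!![0, 1, 0; 1, 0, 0; 0, 0, 1] : Matrix (Fin 3) (Fin 3) K) *
      cubeRootPlaneBasis ω =
      !![0, 1; 1, 0] := by
  have := NeZero.ne (3 : K)
  ext i j
  fin_cases i <;> fin_cases j <;>
    simp [cubeRootPlaneCoords, cubeRootPlaneBasis, mul_apply, Fin.sum_univ_three] <;> grind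

theorem cubeRootPlaneCoords_mul_cycle_mul_basis (hω : ω ^ 2 + ω + 1 = 0) :
    cubeRootPlaneCoords ω * (!![0, 1, 0; 0, 0, 1; 1, 0, 0] : Matrix (Fin 3) (Fin 3) K) *
      cubeRootPlaneBasis ω =
      !![ω, 0; 0, ω ^ 2] := by
  have := NeZero.ne (3 : K)
  ext i j
  fin_cases i <;> fin_cases j <;>
    simp [cubeRootPlaneCoords, cubeRootPlaneBasis, mul_apply, Fin.sum_univ_three] <;> grind

def cubeRootPlaneRep (hω : ω ^ 2 + ω + 1 = 0) :
    rowSignedMonomial (Fin 3) K →* Matrix (Fin 2) (Fin 2) K where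
  toFun M := cubeRootPlaneCoords ω * (M : Matrix (Fin 3) (Fin 3) K).map (· ^ 2) *
    cubeRootPlaneBasis ω
  map_one' := by
    rw [OneMemClass.coe_one, Matrix.map_one (· ^ 2) (zero_pow two_ne_zero) (one_pow 2),
      Matrix.mul_one, cubeRootPlaneCoords_mul_basis hω]
  map_mul' M N := by
    rw [Submonoid.coe_mul, map_sq_mul_of_rows_pairwise_mul_eq_zero M.2.1]
    exact sandwich_mul_of_mulVec_eq (cubeRootPlaneBasis_mul_coords hω)
      (cubeRootPlaneCoords_mulVec_one hω) M.2.2 _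

def cubeRootPlaneRepUnits (hω : ω ^ 2 + ω + 1 = 0) :
    (rowSignedMonomial (Fin 3) K).units →* GL (Fin 2) K :=
  (Units.map (cubeRootPlaneRep hω)).comp
    (rowSignedMonomial (Fin 3) K).unitsEquivUnitsType.toMonoidHom

theorem coe_cubeRootPlaneRepUnits_apply (hω : ω ^ 2 + ω + 1 = 0)
    (g : (rowSignedMonomial (Fin 3) K).units) :
    (cubeRootPlaneRepUnits hω g : Matrix (Fin 2) (Fin 2) K) =
      cubeRootPlaneCoords ω * ((g : GL (Fin 3) K) : Matrix (Fin 3) (Fin 3) K).map (· ^ 2) *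
        cubeRootPlaneBasis ω :=
  rfl

end CubeRootPlane

theorem closure_le_rowSignedMonomial_units {R : Type*} [CommRing R] {σ τ : GL (Fin 3) R}
    (hσ : (σ : Matrix (Fin 3) (Fin 3) R) = !![0, -1, 0; 1, 0, 0; 0, 0, 1])
    (hτ : (τ : Matrix (Fin 3) (Fin 3) R) = !![0, 1, 0; 0, 0, 1; 1, 0, 0]) :
    Subgroup.closure {σ, τ} ≤ (rowSignedMonomial (Fin 3) R).units := by
  have hσinv : (↑σ⁻¹ : Matrix (Fin 3) (Fin 3) R) = !![0, 1, 0; -1, 0, 0; 0, 0, 1] := by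
    rw [Matrix.coe_units_inv, hσ]
    exact Matrix.inv_eq_left_inv (by simp [Matrix.one_fin_three])
  have hτinv : (↑τ⁻¹ : Matrix (Fin 3) (Fin 3) R) = !![0, 0, 1; 1, 0, 0; 0, 1, 0] := by
    rw [Matrix.coe_units_inv, hτ]
    exact Matrix.inv_eq_left_inv (by simp [Matrix.one_fin_three])
  rw [Subgroup.closure_le, Set.insert_subset_iff, Set.singleton_subset_iff]
  refine ⟨Submonoid.mem_units_of_val_mem_inv_val_mem _ ?_ ?_,
    Submonoid.mem_units_of_val_mem_inv_val_mem _ ?_ ?_⟩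
  all_goals
    simp only [hσ, hσinv, hτ, hτinv]
    refine ⟨fun i a b hab => ?_, ?_⟩
    · fin_cases i <;> fin_cases a <;> fin_cases b <;> simp at hab ⊢
    · ext i
      fin_cases i <;> simp [mulVec, dotProduct, Fin.sum_univ_three]

/-- For the octahedral group `H = ⟨σ, τ⟩ ⊆ GL(3, ℂ)` of the paper (with
`σ = [[0,-1,0],[1,0,0],[0,0,1]]` and `τ = [[0,1,0],[0,0,1],[1,0,0]]`), there is a group
homomorphism `ρ : H →* GL(2, ℂ)` with `ρ(σ) = [[0,1],[1,0]]` and `ρ(τ) = diag(ω, ω²)`,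
where `ω` is a primitive cube root of unity.  This is the paper's realization of the
two-dimensional irreducible representation `V₂` of the octahedral group. -/
theorem octahedral_two_dimensional_representation (ω : ℂ) (hω : ω ^ 2 + ω + 1 = 0)
    (σ τ : GL (Fin 3) ℂ)
    (hσ : (σ : Matrix (Fin 3) (Fin 3) ℂ) = !![0, -1, 0; 1, 0, 0; 0, 0, 1])
    (hτ : (τ : Matrix (Fin 3) (Fin 3) ℂ) = !![0, 1, 0; 0, 0, 1; 1, 0, 0]) :
    ∃ ρ : ↥(Subgroup.closure {σ, τ} : Subgroup (GL (Fin 3) ℂ)) →* GL (Fin 2) ℂ,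
      ((ρ ⟨σ, Subgroup.subset_closure (Set.mem_insert _ _)⟩ :
          GL (Fin 2) ℂ) : Matrix (Fin 2) (Fin 2) ℂ) = !![0, 1; 1, 0] ∧
      ((ρ ⟨τ, Subgroup.subset_closure (Set.mem_insert_of_mem _ (Set.mem_singleton _))⟩ :
          GL (Fin 2) ℂ) : Matrix (Fin 2) (Fin 2) ℂ) = !![ω, 0; 0, ω ^ 2] := by
  have hle := closure_le_rowSignedMonomial_units hσ hτ
  refine ⟨(cubeRootPlaneRepUnits hω).comp (Subgroup.inclusion hle), ?_, ?_⟩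
  · rw [MonoidHom.comp_apply, coe_cubeRootPlaneRepUnits_apply,
      ← cubeRootPlaneCoords_mul_swap_mul_basis hω]
    congr 2
    ext i j
    fin_cases i <;> fin_cases j <;> simp [hσ]
  · rw [MonoidHom.comp_apply, coe_cubeRootPlaneRepUnits_apply,
      ← cubeRootPlaneCoords_mul_cycle_mul_basis hω]
    congr 2
    ext i j
    fin_cases i <;> fin_cases j <;> simp [hτ]
end

section
/- In the polynomial ring ℂ[x,y,z] the following three identities hold: R₀² = R₁R₂ + 3f₀f₃², R₁² = R₀R₂ + 3f₁f₃², and R₂² = R₀R₁ + 3f₂f₃². (These are the homogeneous relations between the semi-invariant polynomials of the tetrahedral group listed in Section 5.3 of the paper.) -/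
open MvPolynomial

namespace PolyhedralTetrahedral

/-- `x` in `ℂ[x,y,z]`. -/
noncomputable def x : MvPolynomial (Fin 3) ℂ := X 0
/-- `y` in `ℂ[x,y,z]`. -/
noncomputable def y : MvPolynomial (Fin 3) ℂ := X 1
/-- `z` in `ℂ[x,y,z]`. -/
noncomputable def z : MvPolynomial (Fin 3) ℂ := X 2

/-- `f₀ = x² + y² + z²`. -/
noncomputable def f₀ : MvPolynomial (Fin 3) ℂ := x ^ 2 + y ^ 2 + z ^ 2
/-- `f₁ = x² + ω²y² + ωz²`. -/
noncomputable def f₁ (ω : ℂ) : MvPolynomial (Fin 3) ℂ :=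
  x ^ 2 + C (ω ^ 2) * y ^ 2 + C ω * z ^ 2
/-- `f₂ = x² + ωy² + ω²z²`. -/
noncomputable def f₂ (ω : ℂ) : MvPolynomial (Fin 3) ℂ :=
  x ^ 2 + C ω * y ^ 2 + C (ω ^ 2) * z ^ 2
/-- `R₀ = y²z² + x²z² + x²y²`. -/
noncomputable def R₀ : MvPolynomial (Fin 3) ℂ :=
  y ^ 2 * z ^ 2 + x ^ 2 * z ^ 2 + x ^ 2 * y ^ 2
/-- `R₁ = y²z² + ωx²z² + ω²x²y²`. -/
noncomputable def R₁ (ω : ℂ) : MvPolynomial (Fin 3) ℂ :=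
  y ^ 2 * z ^ 2 + C ω * x ^ 2 * z ^ 2 + C (ω ^ 2) * x ^ 2 * y ^ 2
/-- `R₂ = y²z² + ω²x²z² + ωx²y²`. -/
noncomputable def R₂ (ω : ℂ) : MvPolynomial (Fin 3) ℂ :=
  y ^ 2 * z ^ 2 + C (ω ^ 2) * x ^ 2 * z ^ 2 + C ω * x ^ 2 * y ^ 2


/-- `f₃ = xyz`. -/
noncomputable def f₃ : MvPolynomial (Fin 3) ℂ := x * y * z

/-- The relations `R₀² = R₁R₂ + 3f₀f₃²`, `R₁² = R₀R₂ + 3f₁f₃²` and `R₂² = R₀R₁ + 3f₂f₃²`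
between the semi-invariant polynomials of the tetrahedral group (Section 5.3 of the
paper). -/
theorem relations_deg_eight (ω : ℂ) (hω : ω ^ 2 + ω + 1 = 0) :
    R₀ ^ 2 = R₁ ω * R₂ ω + 3 * f₀ * f₃ ^ 2 ∧
      R₁ ω ^ 2 = R₀ * R₂ ω + 3 * f₁ ω * f₃ ^ 2 ∧
      R₂ ω ^ 2 = R₀ * R₁ ω + 3 * f₂ ω * f₃ ^ 2 := by
  have h : (C ω : MvPolynomial (Fin 3) ℂ) ^ 2 + C ω + 1 = 0 := by
    have := congrArg (C : ℂ →+* MvPolynomial (Fin 3) ℂ) hω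
    simpa using this
  set a : MvPolynomial (Fin 3) ℂ := (X 1) ^ 2 * (X 2) ^ 2 with ha
  set b : MvPolynomial (Fin 3) ℂ := (X 0) ^ 2 * (X 2) ^ 2 with hb
  set c : MvPolynomial (Fin 3) ℂ := (X 0) ^ 2 * (X 1) ^ 2 with hc
  set w : MvPolynomial (Fin 3) ℂ := C ω with hw
  refine ⟨?_, ?_, ?_⟩ <;>
    simp only [R₀, R₁, R₂, f₀, f₁, f₂, f₃, x, y, z, map_pow, ← ha, ← hb, ← hc, ← hw]
  · linear_combination (-(a*b) - a*c + (1 - w)*(b^2 + c^2) - (w^2 - w + 1)*b*c) * h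
  · linear_combination (w*(w-1)*c^2 - a*b - a*c + (2*w - 3)*b*c) * h
  · linear_combination (w^2*(w^2-1)*c^2 - w^2*(1+w)*(w-1)*c^2 + w*(w-1)*b^2 - a*b - a*c + (2*w^2 - 3 - 2*w*(w-1))*b*c) * h

end PolyhedralTetrahedral
end

section
/- The polynomials f₀, f₃, R₀ and f₄ are invariant under the tetrahedral group: for every g ∈ H, every v : Fin 3 → ℂ, and each p ∈ {f₀, f₃, R₀, f₄}, one has p(g.mulVec v) = p(v) (evaluation of the polynomial at the vector g·v equals its evaluation at v). (This expresses the paper's statement that f₀, f₃, R₀ = (f₀² − f₁f₂)/3 and f₄ are generators of the invariant ring S^G for G = 𝕋, Section 5.3.) -/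
open Matrix MvPolynomial

namespace PolyhedralTetrahedral

/-- `f₄ = (x²−y²)(y²−z²)(z²−x²)`. -/
noncomputable def f₄ : MvPolynomial (Fin 3) ℂ :=
  (x ^ 2 - y ^ 2) * (y ^ 2 - z ^ 2) * (z ^ 2 - x ^ 2)
lemma eval_f₀ (w : Fin 3 → ℂ) : eval w f₀ = w 0 ^ 2 + w 1 ^ 2 + w 2 ^ 2 := by
  simp [f₀, x, y, z]

lemma eval_f₃ (w : Fin 3 → ℂ) : eval w f₃ = w 0 * w 1 * w 2 := by
  simp [f₃, x, y, z]

lemma eval_R₀ (w : Fin 3 → ℂ) :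
    eval w R₀ = w 1 ^ 2 * w 2 ^ 2 + w 0 ^ 2 * w 2 ^ 2 + w 0 ^ 2 * w 1 ^ 2 := by
  simp [R₀, x, y, z]

lemma eval_f₄ (w : Fin 3 → ℂ) :
    eval w f₄ = (w 0 ^ 2 - w 1 ^ 2) * (w 1 ^ 2 - w 2 ^ 2) * (w 2 ^ 2 - w 0 ^ 2) := by
  simp [f₄, x, y, z]

/-- The polynomials `f₀`, `f₃`, `R₀` and `f₄` are invariant under the tetrahedral group
`H = ⟨σ, τ⟩ ⊆ GL(3, ℂ)` (with `σ = diag(-1, -1, 1)` and `τ = [[0,1,0],[0,0,1],[1,0,0]]`):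
for every `g ∈ H` and every vector `v`, evaluating each of them at `g · v` gives the
same value as evaluating at `v`.  This expresses that they are generators of the
invariant ring `S^G` for `G = 𝕋` (Section 5.3 of the paper). -/
theorem invariants_tetrahedral (σ τ : GL (Fin 3) ℂ)
    (hσ : (σ : Matrix (Fin 3) (Fin 3) ℂ) = !![-1, 0, 0; 0, -1, 0; 0, 0, 1])
    (hτ : (τ : Matrix (Fin 3) (Fin 3) ℂ) = !![0, 1, 0; 0, 0, 1; 1, 0, 0]) :
    ∀ g ∈ (Subgroup.closure {σ, τ} : Subgroup (GL (Fin 3) ℂ)), ∀ v : Fin 3 → ℂ,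
      ∀ p ∈ ({f₀, f₃, R₀, f₄} : Set (MvPolynomial (Fin 3) ℂ)),
        eval ((g : Matrix (Fin 3) (Fin 3) ℂ).mulVec v) p = eval v p := by
  intro g hg
  induction hg using Subgroup.closure_induction with
  | mem a ha =>
    intro v p hp
    rcases ha with ha | ha <;> subst ha
    · have hv : (↑a : Matrix (Fin 3) (Fin 3) ℂ).mulVec v = ![-v 0, -v 1, v 2] := by
        funext i
        fin_cases i <;>
          simp [hσ, Matrix.mulVec, dotProduct, Fin.sum_univ_three]
      rw [hv]
      rcases hp with hp | hp | hp | hp <;> subst hp <;>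
        simp only [eval_f₀, eval_f₃, eval_R₀, eval_f₄, Matrix.cons_val_zero,
          Matrix.cons_val_one, Matrix.head_cons, Matrix.cons_val_two, Matrix.tail_cons] <;>
        ring
    · have hv : (↑a : Matrix (Fin 3) (Fin 3) ℂ).mulVec v = ![v 1, v 2, v 0] := by
        funext i
        fin_cases i <;>
          simp [hτ, Matrix.mulVec, dotProduct, Fin.sum_univ_three]
      rw [hv]
      rcases hp with hp | hp | hp | hp <;> subst hp <;>
        simp only [eval_f₀, eval_f₃, eval_R₀, eval_f₄, Matrix.cons_val_zero,
          Matrix.cons_val_one, Matrix.head_cons, Matrix.cons_val_two, Matrix.tail_cons] <;>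
        ring
  | one =>
    intro v p hp
    simp
  | mul a b _ _ iha ihb =>
    intro v p hp
    have : ((↑(a * b) : Matrix (Fin 3) (Fin 3) ℂ).mulVec v)
        = (↑a : Matrix (Fin 3) (Fin 3) ℂ).mulVec ((↑b : Matrix (Fin 3) (Fin 3) ℂ).mulVec v) := by
      simp [Matrix.mulVec_mulVec]
    rw [this, iha _ p hp, ihb v p hp]
  | inv a _ ih =>
    intro v p hp
    have h1 := ih ((↑a⁻¹ : Matrix (Fin 3) (Fin 3) ℂ).mulVec v) p hp
    rw [Matrix.mulVec_mulVec] at h1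
    have : (↑a : Matrix (Fin 3) (Fin 3) ℂ) * (↑a⁻¹ : Matrix (Fin 3) (Fin 3) ℂ) = 1 := by
      rw [← Units.val_mul, mul_inv_cancel, Units.val_one]
    rw [this, Matrix.one_mulVec] at h1
    exact h1.symm


end PolyhedralTetrahedral
end

section
/- The polynomials f₁ and f₂ are relative invariants of the tetrahedral group affording the characters V₁ and V₂: for every v : Fin 3 → ℂ one has f₁(σ.mulVec v) = f₁(v), f₂(σ.mulVec v) = f₂(v), f₁(τ.mulVec v) = ω·f₁(v) and f₂(τ.mulVec v) = ω²·f₂(v). (Note τ.mulVec (v₀,v₁,v₂) = (v₁,v₂,v₀), so τ acts by the cyclic substitution x↦y, y↦z, z↦x; this semi-invariance underlies the paper's computation of the local coordinates on crepant resolutions of ℂ³/𝕋.) -/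
open Matrix MvPolynomial

namespace PolyhedralTetrahedral

/-- The polynomials `f₁` and `f₂` are relative invariants of the tetrahedral group
affording the characters `V₁` and `V₂`: with `σ = diag(-1, -1, 1)` and
`τ = [[0,1,0],[0,0,1],[1,0,0]]` the generators of the tetrahedral group `𝕋`, one has
`f₁(σ·v) = f₁(v)`, `f₂(σ·v) = f₂(v)`, `f₁(τ·v) = ω·f₁(v)` and `f₂(τ·v) = ω²·f₂(v)`
for every vector `v`. -/
theorem semi_invariants_tetrahedral (ω : ℂ) (hω : ω ^ 2 + ω + 1 = 0)
    (σ τ : GL (Fin 3) ℂ)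
    (hσ : (σ : Matrix (Fin 3) (Fin 3) ℂ) = !![-1, 0, 0; 0, -1, 0; 0, 0, 1])
    (hτ : (τ : Matrix (Fin 3) (Fin 3) ℂ) = !![0, 1, 0; 0, 0, 1; 1, 0, 0]) :
    ∀ v : Fin 3 → ℂ,
      eval ((σ : Matrix (Fin 3) (Fin 3) ℂ).mulVec v) (f₁ ω) = eval v (f₁ ω) ∧
      eval ((σ : Matrix (Fin 3) (Fin 3) ℂ).mulVec v) (f₂ ω) = eval v (f₂ ω) ∧
      eval ((τ : Matrix (Fin 3) (Fin 3) ℂ).mulVec v) (f₁ ω) = ω * eval v (f₁ ω) ∧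
      eval ((τ : Matrix (Fin 3) (Fin 3) ℂ).mulVec v) (f₂ ω) = ω ^ 2 * eval v (f₂ ω) := by
  have h3 : ω ^ 3 = 1 := by linear_combination (ω - 1) * hω
  intro v
  have hσv : (σ : Matrix (Fin 3) (Fin 3) ℂ).mulVec v = ![-v 0, -v 1, v 2] := by
    funext i; fin_cases i <;>
      simp [hσ, Matrix.mulVec, dotProduct, Fin.sum_univ_three]
  have hτv : (τ : Matrix (Fin 3) (Fin 3) ℂ).mulVec v = ![v 1, v 2, v 0] := by
    funext i; fin_cases i <;>
      simp [hτ, Matrix.mulVec, dotProduct, Fin.sum_univ_three]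
  rw [hσv, hτv]
  simp only [f₁, f₂, x, y, z, eval_add, eval_mul, eval_pow, eval_C, eval_X,
    Matrix.cons_val_zero, Matrix.cons_val_one, Matrix.head_cons, Matrix.cons_val_two,
    Matrix.tail_cons]
  exact ⟨by ring, by ring, by linear_combination (- v 1 ^ 2) * h3,
    by linear_combination (- v 1 ^ 2 - ω * v 2 ^ 2) * h3⟩

end PolyhedralTetrahedral
end

section
/- The three elements z², f₁/(2(xy)^m) and −f₂/(2(xy)^m·z) of K are algebraically independent over ℂ. (This is the statable content of the local chart U_{m+2} ≅ Spec ℂ[z², f₁/(2x^m y^m), −f₂/(2x^m y^m z)] ≅ ℂ³ in Theorem 6.2(2) of the paper, describing the crepant resolutions of ℂ³/D₂ₙ for n odd.) -/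
/-!
Since `x, y, z` form a transcendence basis of `K`, three elements of `K` over which `x`, `y`
and `z` are algebraic form a transcendence basis as well. Put `b = f₁ / (2(xy)ᵐ)` and
`c = -f₂ / (2(xy)ᵐ z)`. Then `z` is a square root of `z²`, while `b - cz = xᵐ⁺¹ / yᵐ` and
`b + cz = yᵐ⁺¹ / xᵐ`, so that `xⁿ = (b - cz)ᵐ⁺¹ (b + cz)ᵐ` and `yⁿ = (b + cz)ᵐ⁺¹ (b - cz)ᵐ`.
-/

open MvPolynomial

section Transcendence

open Algebra Set

theorem IsTranscendenceBasis.of_isAlgebraic_adjoin_range {R A ι : Type*} [CommRing R]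
    [Nontrivial R] [CommRing A] [NoZeroDivisors A] [Algebra R A] [FaithfulSMul R A] [Finite ι]
    {b v : ι → A} (hb : IsTranscendenceBasis R b)
    (hv : ∀ i, IsAlgebraic (adjoin R (range v)) (b i)) : IsTranscendenceBasis R v := by
  have : Algebra.IsAlgebraic (adjoin R (range v)) A :=
    ⟨fun a ↦ (hb.isAlgebraic.isAlgebraic a).adjoin_of_forall_isAlgebraic <| by
      rintro _ ⟨⟨i, rfl⟩, -⟩
      exact hv i⟩
  exact Algebra.IsAlgebraic.isTranscendenceBasis_of_lift_le_trdeg_of_finite R v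
    hb.lift_cardinalMk_eq_trdeg.le

variable {R A : Type*} [CommRing R] [CommRing A] [IsDomain A] [Algebra R A] {s : Set A}
  {a : A} {n : ℕ}

theorem isAlgebraic_adjoin_of_pow_mem (hn : 0 < n) (ha : a ^ n ∈ adjoin R s) :
    IsAlgebraic (adjoin R s) a :=
  .of_pow hn (isAlgebraic_algebraMap (⟨a ^ n, ha⟩ : adjoin R s))

theorem isAlgebraic_adjoin_of_pow_mem_adjoin_insert {t : A} (hn : 0 < n)
    (ht : IsAlgebraic (adjoin R s) t) (ha : a ^ n ∈ adjoin R (insert t s)) :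
    IsAlgebraic (adjoin R s) a :=
  (isAlgebraic_adjoin_of_pow_mem hn ha).adjoin_of_forall_isAlgebraic fun _ hu ↦
    hu.1.resolve_right hu.2 ▸ ht

end Transcendence

section ChartIdentities

variable {K : Type*} [Field K] (m : ℕ) {x y z : K}

theorem pow_two_mul_add_one_eq (hx : x ≠ 0) (hy : y ≠ 0) :
    x ^ (2 * m + 1) = (x ^ (m + 1) / y ^ m) ^ (m + 1) * (y ^ (m + 1) / x ^ m) ^ m := by
  have hprod : x ^ (m + 1) / y ^ m * (y ^ (m + 1) / x ^ m) = x * y := by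
    field_simp; ring
  calc x ^ (2 * m + 1) = x ^ (m + 1) / y ^ m * (x * y) ^ m := by field_simp; ring
    _ = _ := by rw [← hprod]; ring

variable [NeZero (2 : K)]

theorem chart_coord_sub_mul (hx : x ≠ 0) (hy : y ≠ 0) (hz : z ≠ 0) :
    (x ^ (2 * m + 1) + y ^ (2 * m + 1)) / (2 * x ^ m * y ^ m) -
      -(x ^ (2 * m + 1) - y ^ (2 * m + 1)) / (2 * x ^ m * y ^ m * z) * z =
      x ^ (m + 1) / y ^ m := by
  field_simp; ring

theorem chart_coord_add_mul (hx : x ≠ 0) (hy : y ≠ 0) (hz : z ≠ 0) :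
    (x ^ (2 * m + 1) + y ^ (2 * m + 1)) / (2 * x ^ m * y ^ m) +
      -(x ^ (2 * m + 1) - y ^ (2 * m + 1)) / (2 * x ^ m * y ^ m * z) * z =
      y ^ (m + 1) / x ^ m := by
  field_simp; ring

theorem isAlgebraic_adjoin_chart_coords {R : Type*} [CommRing R] [Algebra R K] (hx : x ≠ 0)
    (hy : y ≠ 0) (hz : z ≠ 0) (i : Fin 3) :
    IsAlgebraic (Algebra.adjoin R (Set.range ![z ^ 2,
      (x ^ (2 * m + 1) + y ^ (2 * m + 1)) / (2 * x ^ m * y ^ m),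
      -(x ^ (2 * m + 1) - y ^ (2 * m + 1)) / (2 * x ^ m * y ^ m * z)])) (![x, y, z] i) := by
  set b := (x ^ (2 * m + 1) + y ^ (2 * m + 1)) / (2 * x ^ m * y ^ m)
  set c := -(x ^ (2 * m + 1) - y ^ (2 * m + 1)) / (2 * x ^ m * y ^ m * z)
  set s := Set.range ![z ^ 2, b, c]
  have hz_alg : IsAlgebraic (Algebra.adjoin R s) z :=
    isAlgebraic_adjoin_of_pow_mem two_pos (Algebra.subset_adjoin ⟨0, rfl⟩)
  have mem : ∀ u ∈ insert z s, u ∈ Algebra.adjoin R (insert z s) :=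
    fun _ hu ↦ Algebra.subset_adjoin hu
  have hb := mem b (.inr ⟨1, rfl⟩)
  have hcz := mul_mem (mem c (.inr ⟨2, rfl⟩)) (mem z (.inl rfl))
  fin_cases i
  · refine isAlgebraic_adjoin_of_pow_mem_adjoin_insert (2 * m).succ_pos hz_alg ?_
    change x ^ (2 * m + 1) ∈ _
    rw [pow_two_mul_add_one_eq m hx hy, ← chart_coord_sub_mul m hx hy hz,
      ← chart_coord_add_mul m hx hy hz]
    exact mul_mem (pow_mem (sub_mem hb hcz) _) (pow_mem (add_mem hb hcz) _)
  · refine isAlgebraic_adjoin_of_pow_mem_adjoin_insert (2 * m).succ_pos hz_alg ?_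
    change y ^ (2 * m + 1) ∈ _
    rw [pow_two_mul_add_one_eq m hy hx, ← chart_coord_sub_mul m hx hy hz,
      ← chart_coord_add_mul m hx hy hz]
    exact mul_mem (pow_mem (add_mem hb hcz) _) (pow_mem (sub_mem hb hcz) _)
  · exact hz_alg

end ChartIdentities

theorem chart_U_m_plus_two_dihedral_odd_general (K : Type*) [Field K] [Algebra ℂ K]
    [Algebra (MvPolynomial (Fin 3) ℂ) K]
    [IsScalarTower ℂ (MvPolynomial (Fin 3) ℂ) K]
    [IsFractionRing (MvPolynomial (Fin 3) ℂ) K]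
    (m : ℕ) (n : ℕ) (hn : n = 2 * m + 1)
    (x y z : K)
    (hx : x = algebraMap (MvPolynomial (Fin 3) ℂ) K (X 0))
    (hy : y = algebraMap (MvPolynomial (Fin 3) ℂ) K (X 1))
    (hz : z = algebraMap (MvPolynomial (Fin 3) ℂ) K (X 2))
    (f₁ f₂ : K) (hf₁ : f₁ = x ^ n + y ^ n) (hf₂ : f₂ = x ^ n - y ^ n) :
    AlgebraicIndependent ℂ
      ![z ^ 2, f₁ / (2 * x ^ m * y ^ m), -f₂ / (2 * x ^ m * y ^ m * z)] := by
  subst hn hf₁ hf₂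
  have : Algebra.IsAlgebraic (MvPolynomial (Fin 3) ℂ) K :=
    IsLocalization.isAlgebraic K (nonZeroDivisors _)
  have hxyz : IsTranscendenceBasis ℂ ![x, y, z] := by
    convert (IsTranscendenceBasis.mvPolynomial (Fin 3) ℂ).algebraMap_comp (A := K) using 1
    ext i; fin_cases i <;> simp [hx, hy, hz]
  have : CharZero K := charZero_of_injective_algebraMap (algebraMap ℂ K).injective
  have hx0 : x ≠ 0 := by simpa using hxyz.1.ne_zero 0
  have hy0 : y ≠ 0 := by simpa using hxyz.1.ne_zero 1
  have hz0 : z ≠ 0 := by simpa using hxyz.1.ne_zero 2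
  exact (hxyz.of_isAlgebraic_adjoin_range (isAlgebraic_adjoin_chart_coords m hx0 hy0 hz0)).1

/-- In the fraction field `K = ℂ(x,y,z)` of `ℂ[x,y,z]`, with `f₁ = xⁿ + yⁿ` and
`f₂ = xⁿ − yⁿ` for `n = 2m+1` odd, the three elements `z²`, `f₁/(2(xy)^m)` and
`−f₂/(2(xy)^m z)` are algebraically independent over `ℂ`.  This is the statable content
of the local chart `U_{m+2} ≅ Spec ℂ[z², f₁/(2xᵐyᵐ), −f₂/(2xᵐyᵐz)] ≅ ℂ³` of
Theorem 6.2(2) of the paper, describing the crepant resolutions of `ℂ³/D₂ₙ` for `n`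
odd. -/
theorem chart_U_m_plus_two_dihedral_odd (K : Type*) [Field K] [Algebra ℂ K]
    [Algebra (MvPolynomial (Fin 3) ℂ) K]
    [IsScalarTower ℂ (MvPolynomial (Fin 3) ℂ) K]
    [IsFractionRing (MvPolynomial (Fin 3) ℂ) K]
    (m : ℕ) (hm : 1 ≤ m) (n : ℕ) (hn : n = 2 * m + 1)
    (x y z : K)
    (hx : x = algebraMap (MvPolynomial (Fin 3) ℂ) K (X 0))
    (hy : y = algebraMap (MvPolynomial (Fin 3) ℂ) K (X 1))
    (hz : z = algebraMap (MvPolynomial (Fin 3) ℂ) K (X 2))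
    (f₁ f₂ : K) (hf₁ : f₁ = x ^ n + y ^ n) (hf₂ : f₂ = x ^ n - y ^ n) :
    AlgebraicIndependent ℂ
      ![z ^ 2, f₁ / (2 * x ^ m * y ^ m), -f₂ / (2 * x ^ m * y ^ m * z)] :=
  chart_U_m_plus_two_dihedral_odd_general K m n hn x y z hx hy hz f₁ f₂ hf₁ hf₂
end
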